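/- arXiv:2112.14424 — 2 statements merged into one kernel-verified Lean document; each statement's English description precedes it below -/
import Mathlib

section
/- For the two-qudit ensemble E consisting of the 2d(d−1) states ρ_{i,j}^{(k)} = λ|Ψ_{i,j}^{(k)}⟩⟨Ψ_{i,j}^{(k)}| + (1−λ)σ (i < j, k = 1,2,3,4) with equal prior probabilities 1/(2d(d−1)), where 0 < λ ≤ 1 and σ is any two-qudit state, the guessing probability is p_G(E) = (1 + λ(d²−1)) / (2d(d−1)). -/
open Matrix ComplexOrder Kronecker

noncomputable section

abbrev Op2 (d : ℕ) := Matrix (Fin d × Fin d) (Fin d × Fin d) ℂ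

/-- Partial transpose with respect to the second tensor factor. -/
def PT {d : ℕ} (M : Op2 d) : Op2 d :=
  Matrix.of fun p q => M (p.1, q.2) (q.1, p.2)

/-- Standard basis vector |a⟩ of ℂ^d. -/
def ket1 {d : ℕ} (a : Fin d) : Fin d → ℂ := fun x => if x = a then 1 else 0

/-- Product basis vector |a b⟩ = |a⟩ ⊗ |b⟩ of ℂ^d ⊗ ℂ^d. -/
def ket2 {d : ℕ} (a b : Fin d) : (Fin d × Fin d) → ℂ := fun p => if p = (a, b) then 1 else 0

/-- Rank-one projection |v⟩⟨v|. -/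
def proj {ι : Type*} [Fintype ι] (v : ι → ℂ) : Matrix ι ι ℂ := vecMulVec v (star v)

/-- Bell-type states Ψ_{i,j}^{(k)}; here k : Fin 4 encodes k+1 ∈ {1,2,3,4}. -/
def Psi {d : ℕ} (i j : Fin d) : Fin 4 → ((Fin d × Fin d) → ℂ) := fun k =>
  ![ ((Real.sqrt 2 : ℂ))⁻¹ • (ket2 i i + ket2 j j),
     ((Real.sqrt 2 : ℂ))⁻¹ • (ket2 i i - ket2 j j),
     ((Real.sqrt 2 : ℂ))⁻¹ • (ket2 i j + ket2 j i),
     ((Real.sqrt 2 : ℂ))⁻¹ • (ket2 i j - ket2 j i) ] k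

/-- 𝟙_{i,j} = (|i⟩⟨i|+|j⟩⟨j|) ⊗ (|i⟩⟨i|+|j⟩⟨j|). -/
def oneij {d : ℕ} (i j : Fin d) : Op2 d :=
  (proj (ket1 i) + proj (ket1 j)) ⊗ₖ (proj (ket1 i) + proj (ket1 j))

/-- The product-basis measurement operators M_{i,j}^{(k)}. -/
def Mprod {d : ℕ} (i j : Fin d) : Fin 4 → Op2 d := fun k =>
  ![ ((d : ℂ) - 1)⁻¹ • proj (ket2 i i),
     ((d : ℂ) - 1)⁻¹ • proj (ket2 j j),
     proj (ket2 i j),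
     proj (ket2 j i) ] k

/-- Index set of the example ensemble: pairs i < j together with k ∈ {1,2,3,4}. -/
abbrev Idx (d : ℕ) := {p : Fin d × Fin d // p.1 < p.2} × Fin 4

/-- The states ρ_{i,j}^{(k)} = λ|Ψ⟩⟨Ψ| + (1-λ)σ of the example ensemble. -/
def rhoE {d : ℕ} (lam : ℝ) (σ : Op2 d) (t : Idx d) : Op2 d :=
  (lam : ℂ) • proj (Psi t.1.1.1 t.1.1.2 t.2) + ((1 - lam : ℝ) : ℂ) • σ

/-!
Each `|Ψ⟩⟨Ψ|` is a projection, so `Tr(|Ψ⟩⟨Ψ| M) ≤ Tr M` for every POVM element `M`; summed over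
the POVM this bounds the `λ`-part of the success probability by `Tr 1 = d²`, while the `σ`-part
always contributes exactly `Tr σ = 1`. The bound is attained by the Bell measurement with
weight `1/(d-1)` on the states `|ii⟩ ± |jj⟩`: each of its elements is supported on its own state,
and the weights make it sum to the identity because every `|ii⟩` lies in `d - 1` pairs.
-/

namespace BellEnsemble

open Finset

section RankOne

variable {ι κ : Type*} [Fintype ι] [Fintype κ]

lemma proj_posSemidef (v : ι → ℂ) : (proj v).PosSemidef :=
  posSemidef_vecMulVec_self_star v

lemma proj_mul_proj_of_unit {v : ι → ℂ} (hv : star v ⬝ᵥ v = 1) : proj v * proj v = proj v := by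
  rw [proj, vecMulVec_mul_vecMulVec, hv, one_smul]

lemma trace_proj_mul_le_trace [DecidableEq ι] {v : ι → ℂ} (hv : star v ⬝ᵥ v = 1)
    {M : Matrix ι ι ℂ} (hM : M.PosSemidef) : (proj v * M).trace ≤ M.trace := by
  set Q : Matrix ι ι ℂ := 1 - proj v
  have hQ : Qᴴ = Q := by
    rw [conjTranspose_sub, conjTranspose_one, (proj_posSemidef v).isHermitian.eq]
  have hQQ : Q * Q = Q := by
    simp only [Q, sub_mul, mul_sub, one_mul, mul_one, proj_mul_proj_of_unit hv, sub_self, sub_zero]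
  -- `1 - proj v` is an orthogonal projection, so `M - proj v * M` has the trace of `Qᴴ M Q ⪰ 0`.
  have key : (Qᴴ * M * Q).trace = M.trace - (proj v * M).trace := by
    rw [hQ, trace_mul_cycle, hQQ, sub_mul, one_mul, trace_sub]
  exact sub_nonneg.mp (key ▸ (hM.conjTranspose_mul_mul_same Q).trace_nonneg)

lemma sum_re_trace_eq_card [DecidableEq ι] {M : κ → Matrix ι ι ℂ} (hsum : ∑ t, M t = 1) :
    ∑ t, (M t).trace.re = Fintype.card ι := by
  rw [← Complex.re_sum, ← trace_sum, hsum, trace_one, Complex.natCast_re]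

lemma sum_re_trace_proj_mul_le [DecidableEq ι] {v : κ → ι → ℂ}
    (hv : ∀ t, star (v t) ⬝ᵥ v t = 1) {M : κ → Matrix ι ι ℂ} (hM : ∀ t, (M t).PosSemidef)
    (hsum : ∑ t, M t = 1) :
    ∑ t, (proj (v t) * M t).trace.re ≤ Fintype.card ι :=
  calc ∑ t, (proj (v t) * M t).trace.re ≤ ∑ t, (M t).trace.re :=
        sum_le_sum fun t _ => (Complex.le_def.mp (trace_proj_mul_le_trace (hv t) (hM t))).1
    _ = Fintype.card ι := sum_re_trace_eq_card hsum

lemma sum_re_trace_proj_mul_eq_card [DecidableEq ι] {v : κ → ι → ℂ} {M : κ → Matrix ι ι ℂ}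
    (hvM : ∀ t, proj (v t) * M t = M t) (hsum : ∑ t, M t = 1) :
    ∑ t, (proj (v t) * M t).trace.re = Fintype.card ι := by
  simp only [hvM]
  exact sum_re_trace_eq_card hsum

lemma sum_re_trace_mixture_mul [DecidableEq ι] (lam : ℝ) {σ : Matrix ι ι ℂ} (hσ : σ.trace = 1)
    (v : κ → ι → ℂ) {M : κ → Matrix ι ι ℂ} (hsum : ∑ t, M t = 1) :
    ∑ t, (((lam : ℂ) • proj (v t) + ((1 - lam : ℝ) : ℂ) • σ) * M t).trace.re
      = lam * ∑ t, (proj (v t) * M t).trace.re + (1 - lam) := by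
  have hσM : ∑ t, (σ * M t).trace.re = 1 := by
    rw [← Complex.re_sum, ← trace_sum, ← mul_sum, hsum, mul_one, hσ, Complex.one_re]
  simp only [add_mul, smul_mul, trace_add, trace_smul, smul_eq_mul, Complex.add_re,
    Complex.re_ofReal_mul, sum_add_distrib, ← mul_sum]
  rw [hσM, mul_one]

lemma proj_smul_add_add_proj_smul_sub {c : ℂ} (hc : star c * c = 2⁻¹) (u w : ι → ℂ) :
    proj (c • (u + w)) + proj (c • (u - w)) = proj u + proj w := by
  ext p q
  simp only [Matrix.add_apply, proj, vecMulVec_apply, Pi.smul_apply, Pi.add_apply, Pi.sub_apply,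
    Pi.star_apply, smul_eq_mul, star_mul', star_add, star_sub]
  linear_combination (2 * u p * star (u q) + 2 * w p * star (w q)) * hc

end RankOne

lemma sum_subtype_lt_add_swap {α M : Type*} [Fintype α] [LinearOrder α] [AddCommMonoid M]
    (g : α × α → M) :
    ∑ s : {p : α × α // p.1 < p.2}, (g s.1 + g s.1.swap) = ∑ i, ∑ j ∈ univ.erase i, g (i, j) := by
  have hswap : ∑ p ∈ univ.filter (fun p : α × α => p.1 < p.2), g p.swap
      = ∑ p ∈ univ.filter (fun p : α × α => p.2 < p.1), g p :=
    sum_nbij' Prod.swap Prod.swap (by simp) (by simp) (by simp) (by simp) (by simp)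
  have hdisj : Disjoint (univ.filter (fun p : α × α => p.1 < p.2))
      (univ.filter (fun p : α × α => p.2 < p.1)) :=
    disjoint_filter.mpr fun p _ h => h.asymm
  rw [← sum_subtype (univ.filter fun p : α × α => p.1 < p.2) (by simp) (fun p => g p + g p.swap),
    sum_add_distrib, hswap, ← sum_union hdisj]
  exact sum_finset_product _ _ _ fun p => by simp [lt_or_lt_iff_ne, ne_comm]

variable {d : ℕ}

lemma ket2_eq_single (a b : Fin d) : ket2 a b = Pi.single (a, b) 1 := by
  funext p
  simp [ket2, Pi.single_apply]

lemma star_ket2_dotProduct_ket2 (a b a' b' : Fin d) :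
    star (ket2 a b) ⬝ᵥ ket2 a' b' = if (a', b') = (a, b) then 1 else 0 := by
  simp [ket2_eq_single, Pi.star_single, Pi.single_apply]

lemma sum_proj_ket2 : ∑ p : Fin d × Fin d, proj (ket2 p.1 p.2) = 1 := by
  simp only [ket2_eq_single, proj, Pi.star_single, star_one, ← single_eq_single_vecMulVec_single]
  exact sum_single_one

lemma inv_sqrt_two_mul_self : ((Real.sqrt 2 : ℂ))⁻¹ * ((Real.sqrt 2 : ℂ))⁻¹ = 2⁻¹ := by
  rw [← mul_inv, ← Complex.ofReal_mul, Real.mul_self_sqrt zero_le_two, Complex.ofReal_ofNat]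

lemma star_inv_sqrt_two_mul_self : star ((Real.sqrt 2 : ℂ))⁻¹ * ((Real.sqrt 2 : ℂ))⁻¹ = 2⁻¹ := by
  rw [Complex.star_def, map_inv₀, Complex.conj_ofReal, inv_sqrt_two_mul_self]

lemma Psi_unit {i j : Fin d} (hij : i ≠ j) (k : Fin 4) : star (Psi i j k) ⬝ᵥ Psi i j k = 1 := by
  fin_cases k <;>
    simp [Psi, star_smul, smul_dotProduct, dotProduct_smul, dotProduct_add, add_dotProduct,
      sub_dotProduct, dotProduct_sub, star_ket2_dotProduct_ket2, hij, hij.symm] <;>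
    linear_combination 2 * inv_sqrt_two_mul_self

lemma Psi_unit_idx (t : Idx d) : star (Psi t.1.1.1 t.1.1.2 t.2) ⬝ᵥ Psi t.1.1.1 t.1.1.2 t.2 = 1 :=
  Psi_unit t.1.2.ne t.2

def bellCoeff (d : ℕ) : Fin 4 → ℝ := ![((d : ℝ) - 1)⁻¹, ((d : ℝ) - 1)⁻¹, 1, 1]

def bellPOVM (d : ℕ) (t : Idx d) : Op2 d :=
  (bellCoeff d t.2 : ℂ) • proj (Psi t.1.1.1 t.1.1.2 t.2)

lemma bellCoeff_nonneg (hd : 2 ≤ d) (k : Fin 4) : 0 ≤ bellCoeff d k := by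
  have : (0 : ℝ) ≤ (d : ℝ) - 1 := by
    have : (2 : ℝ) ≤ d := by exact_mod_cast hd
    linarith
  fin_cases k <;> simp [bellCoeff, this]

lemma bellPOVM_posSemidef (hd : 2 ≤ d) (t : Idx d) : (bellPOVM d t).PosSemidef :=
  (proj_posSemidef _).smul (Complex.zero_le_real.mpr (bellCoeff_nonneg hd t.2))

lemma proj_Psi_mul_bellPOVM (t : Idx d) :
    proj (Psi t.1.1.1 t.1.1.2 t.2) * bellPOVM d t = bellPOVM d t := by
  rw [bellPOVM, Matrix.mul_smul, proj_mul_proj_of_unit (Psi_unit_idx t)]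

lemma sum_bellPOVM_fin_four (i j : Fin d) :
    ∑ k, (bellCoeff d k : ℂ) • proj (Psi i j k)
      = ((((d : ℝ) - 1)⁻¹ : ℝ) : ℂ) • proj (ket2 i i) + proj (ket2 i j)
        + (((((d : ℝ) - 1)⁻¹ : ℝ) : ℂ) • proj (ket2 j j) + proj (ket2 j i)) := by
  have hBell := proj_smul_add_add_proj_smul_sub (ι := Fin d × Fin d) star_inv_sqrt_two_mul_self
  simp only [Fin.sum_univ_four, bellCoeff, Psi, Matrix.cons_val, Complex.ofReal_one, one_smul]
  rw [add_assoc, ← smul_add, hBell, hBell, smul_add]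
  abel

lemma sum_bellPOVM (hd : 2 ≤ d) : ∑ t, bellPOVM d t = 1 := by
  set c : ℂ := ((((d : ℝ) - 1)⁻¹ : ℝ) : ℂ)
  -- each `|ii⟩⟨ii|` occurs in `d - 1` pairs, with weight `1 / (d - 1)`
  have hc : (d - 1 : ℕ) • c = 1 := by
    have hd' : ((d : ℝ) - 1) ≠ 0 := by
      have : (2 : ℝ) ≤ d := by exact_mod_cast hd
      linarith
    have hcR : ((d - 1 : ℕ) : ℝ) * ((d : ℝ) - 1)⁻¹ = 1 := by
      rw [Nat.cast_sub (by omega), Nat.cast_one, mul_inv_cancel₀ hd']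
    rw [← Nat.cast_smul_eq_nsmul ℂ, smul_eq_mul, ← Complex.ofReal_natCast, ← Complex.ofReal_mul,
      hcR, Complex.ofReal_one]
  calc ∑ t, bellPOVM d t
      = ∑ s : {p : Fin d × Fin d // p.1 < p.2},
          ((c • proj (ket2 s.1.1 s.1.1) + proj (ket2 s.1.1 s.1.2))
            + (c • proj (ket2 s.1.2 s.1.2) + proj (ket2 s.1.2 s.1.1))) := by
        rw [Fintype.sum_prod_type]
        exact sum_congr rfl fun s _ => sum_bellPOVM_fin_four s.1.1 s.1.2
    _ = ∑ i, ∑ j ∈ univ.erase i, (c • proj (ket2 i i) + proj (ket2 i j)) :=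
        sum_subtype_lt_add_swap fun p => c • proj (ket2 p.1 p.1) + proj (ket2 p.1 p.2)
    _ = ∑ i, ∑ j, proj (ket2 i j) := by
        refine sum_congr rfl fun i _ => ?_
        rw [sum_add_distrib, sum_const, card_erase_of_mem (mem_univ i), card_univ,
          Fintype.card_fin, ← smul_assoc, hc, one_smul,
          add_sum_erase univ (fun j => proj (ket2 i j)) (mem_univ i)]
    _ = 1 := by
        rw [← Fintype.sum_prod_type']
        exact sum_proj_ket2

lemma sum_re_trace_rhoE_mul (lam : ℝ) {σ : Op2 d} (hσ : σ.trace = 1) {M : Idx d → Op2 d}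
    (hsum : ∑ t, M t = 1) :
    ∑ t, (rhoE lam σ t * M t).trace.re
      = lam * ∑ t, (proj (Psi t.1.1.1 t.1.1.2 t.2) * M t).trace.re + (1 - lam) :=
  sum_re_trace_mixture_mul lam hσ _ hsum

end BellEnsemble

open BellEnsemble

theorem pG_example_general {d : ℕ} (hd : 2 ≤ d) (lam : ℝ) (hlam0 : 0 < lam)
    (σ : Op2 d) (hσ : σ.PosSemidef ∧ σ.trace = 1) :
    IsGreatest
      {x | ∃ M : Idx d → Op2 d, (∀ t, (M t).PosSemidef) ∧ (∑ t, M t = 1) ∧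
        x = ∑ t, (1 / (2 * d * (d - 1)) : ℝ) * ((rhoE lam σ t * M t).trace).re}
      ((1 + lam * ((d : ℝ) ^ 2 - 1)) / (2 * d * (d - 1))) := by
  have hval : (1 + lam * ((d : ℝ) ^ 2 - 1)) / (2 * d * (d - 1))
      = 1 / (2 * d * (d - 1)) * (lam * Fintype.card (Fin d × Fin d) + (1 - lam)) := by
    simp only [Fintype.card_prod, Fintype.card_fin, Nat.cast_mul]
    ring
  refine ⟨⟨bellPOVM d, bellPOVM_posSemidef hd, sum_bellPOVM hd, ?_⟩, ?_⟩
  · rw [← Finset.mul_sum, sum_re_trace_rhoE_mul lam hσ.2 (sum_bellPOVM hd),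
      sum_re_trace_proj_mul_eq_card proj_Psi_mul_bellPOVM (sum_bellPOVM hd), hval]
  · rintro x ⟨M, hM, hsum, rfl⟩
    have hdR : (2 : ℝ) ≤ d := by exact_mod_cast hd
    have hweight : 0 ≤ 1 / (2 * (d : ℝ) * (d - 1)) := one_div_nonneg.mpr (by nlinarith)
    rw [← Finset.mul_sum, sum_re_trace_rhoE_mul lam hσ.2 hsum, hval]
    gcongr
    exact sum_re_trace_proj_mul_le Psi_unit_idx hM hsum

theorem pG_example {d : ℕ} (hd : 2 ≤ d) (lam : ℝ) (hlam0 : 0 < lam) (hlam1 : lam ≤ 1)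
    (σ : Op2 d) (hσ : σ.PosSemidef ∧ σ.trace = 1) :
    IsGreatest
      {x | ∃ M : Idx d → Op2 d, (∀ t, (M t).PosSemidef) ∧ (∑ t, M t = 1) ∧
        x = ∑ t, (1 / (2 * d * (d - 1)) : ℝ) * ((rhoE lam σ t * M t).trace).re}
      ((1 + lam * ((d : ℝ) ^ 2 - 1)) / (2 * d * (d - 1))) :=
  pG_example_general hd lam hlam0 σ hσ
end
end

section
/- For the two-qudit ensemble E of the 2d(d−1) states ρ_{i,j}^{(k)} = λ|Ψ_{i,j}^{(k)}⟩⟨Ψ_{i,j}^{(k)}| + (1−λ)σ with equal priors 1/(2d(d−1)), the quantity q_G(E) = max over POVMs of ∑ η Tr(ρ^PT M) equals (2 + λ(d²−2)) / (4d(d−1)), achieved by the product-basis POVM with M_{i,j}^{(1)} = |ii⟩⟨ii|/(d−1), M_{i,j}^{(2)} = |jj⟩⟨jj|/(d−1), M_{i,j}^{(3)} = |ij⟩⟨ij|, M_{i,j}^{(4)} = |ji⟩⟨ji|. -/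
open Matrix ComplexOrder Kronecker

noncomputable section

/-!
The objective of a POVM `M` equals `η (λ S(M) + 1 - λ)` with `η = 1/(2d(d-1))` and
`S(M) = ∑ₜ Re Tr(Ψₜ^PT Mₜ)`, because `Tr σ^PT = Tr σ = 1` and `∑ₜ Mₜ = 𝟙`. Writing the Bell
projectors in the product basis gives `½𝟙 - Ψ_{i,j}^{(k)PT} = ½(𝟙 - 𝟙_{i,j}) + Ψ_{i,j}^{(5-k)}`,
a positive semidefinite operator, so `Re Tr(Ψₜ^PT Mₜ) ≤ ½ Re Tr Mₜ` and `S(M) ≤ ½ Tr 𝟙 = d²/2`.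
Each product-basis operator `M_{i,j}^{(k)}` is supported on a product vector `|ab⟩` with
`⟨ab|Ψ_{i,j}^{(k)PT}|ab⟩ = ½`, so it attains this bound.
-/

lemma Complex.inv_natCast_sub_one_nonneg {d : ℕ} (hd : 1 ≤ d) : (0 : ℂ) ≤ ((d : ℂ) - 1)⁻¹ := by
  rw [← Nat.cast_pred hd]
  positivity

lemma Matrix.PosSemidef.trace_mul_nonneg {n : Type*} [Fintype n] [DecidableEq n]
    {A B : Matrix n n ℂ} (hA : A.PosSemidef) (hB : B.PosSemidef) : 0 ≤ (A * B).trace := by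
  obtain ⟨C, rfl⟩ : ∃ C : Matrix n n ℂ, A = Cᴴ * C := by
    open scoped MatrixOrder in exact CStarAlgebra.nonneg_iff_eq_star_mul_self.mp hA.nonneg
  rw [mul_assoc, trace_mul_comm]
  exact (hB.mul_mul_conjTranspose_same C).trace_nonneg

lemma Finset.sum_subtype_lt_add_swap {ι M : Type*} [LinearOrder ι] [Fintype ι]
    [AddCommMonoid M] (f : ι → ι → M) :
    ∑ s : {p : ι × ι // p.1 < p.2}, (f s.1.1 s.1.2 + f s.1.2 s.1.1) =
      ∑ i, ∑ j ∈ univ.erase i, f i j := by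
  have hswap : ∑ i, ∑ j, (if i < j then f j i else 0) = ∑ i, ∑ j, (if j < i then f i j else 0) :=
    Finset.sum_comm
  calc ∑ s : {p : ι × ι // p.1 < p.2}, (f s.1.1 s.1.2 + f s.1.2 s.1.1)
      = ∑ i, ∑ j, (if i < j then f i j + f j i else 0) := by
        rw [← Fintype.sum_prod_type', ← Finset.sum_filter]
        exact (Finset.sum_subtype _ (by simp) (fun p : ι × ι => f p.1 p.2 + f p.2 p.1)).symm
    _ = ∑ i, ∑ j, ((if i < j then f i j else 0) + (if j < i then f i j else 0)) := by
        simp only [ite_add_zero, Finset.sum_add_distrib, hswap]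
    _ = ∑ i, ∑ j, (if j ≠ i then f i j else 0) := by
        refine Fintype.sum_congr _ _ fun i => Fintype.sum_congr _ _ fun j => ?_
        rcases lt_trichotomy i j with h | rfl | h
        · simp [h, h.ne', not_lt_of_gt h]
        · simp
        · simp [h, h.ne, not_lt_of_gt h]
    _ = ∑ i, ∑ j ∈ univ.erase i, f i j := by
        simp only [← Finset.sum_filter, Finset.filter_ne']

section Proj

variable {ι : Type*} [Fintype ι]

lemma proj_add (u v : ι → ℂ) :
    proj (u + v) = proj u + proj v + vecMulVec u (star v) + vecMulVec v (star u) := by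
  simp only [proj, star_add, add_vecMulVec, vecMulVec_add]
  abel

lemma proj_sub (u v : ι → ℂ) :
    proj (u - v) = proj u + proj v - vecMulVec u (star v) - vecMulVec v (star u) := by
  simp only [proj, star_sub, sub_vecMulVec, vecMulVec_sub]
  abel

lemma proj_smul (c : ℂ) (v : ι → ℂ) : proj (c • v) = (star c * c) • proj v := by
  simp only [proj, star_smul, smul_vecMulVec, vecMulVec_smul, smul_smul]

end Proj

section TwoQudits

variable {d : ℕ}

lemma ket1_eq_single (a : Fin d) : ket1 a = Pi.single a 1 := by
  ext p
  simp [ket1, Pi.single_apply]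

lemma ket2_eq_single (a b : Fin d) : ket2 a b = Pi.single (a, b) 1 := by
  ext p
  simp [ket2, Pi.single_apply]

lemma proj_ket1 (a : Fin d) : proj (ket1 a) = single a a 1 := by
  simp [proj, ket1_eq_single, single_eq_single_vecMulVec_single]

lemma vecMulVec_ket2_star_ket2 (a b c e : Fin d) :
    vecMulVec (ket2 a b) (star (ket2 c e)) = single (a, b) (c, e) 1 := by
  simp [ket2_eq_single, single_eq_single_vecMulVec_single]

lemma proj_ket2 (a b : Fin d) : proj (ket2 a b) = single (a, b) (a, b) 1 :=
  vecMulVec_ket2_star_ket2 a b a b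

lemma sum_proj_ket2 : ∑ a : Fin d, ∑ b : Fin d, proj (ket2 a b) = 1 := by
  simp only [proj_ket2, ← Fintype.sum_prod_type', sum_single_one]

@[simp] lemma PT_add (A B : Op2 d) : PT (A + B) = PT A + PT B := rfl

@[simp] lemma PT_sub (A B : Op2 d) : PT (A - B) = PT A - PT B := rfl

@[simp] lemma PT_smul (c : ℂ) (A : Op2 d) : PT (c • A) = c • PT A := rfl

lemma trace_PT (A : Op2 d) : (PT A).trace = A.trace := rfl

lemma PT_single (a b c e : Fin d) (x : ℂ) :
    PT (single (a, b) (c, e) x) = single (a, e) (c, b) x := by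
  ext p q
  simp only [PT, of_apply, single_apply, Prod.mk.injEq]
  grind

lemma oneij_eq (i j : Fin d) :
    oneij i j = proj (ket2 i i) + proj (ket2 i j) + proj (ket2 j i) + proj (ket2 j j) := by
  simp only [oneij, proj_ket1, proj_ket2, add_kronecker, kronecker_add, single_kronecker_single,
    mul_one]
  abel

lemma posSemidef_one_sub_oneij {i j : Fin d} (hij : i ≠ j) : (1 - oneij i j).PosSemidef := by
  simp only [oneij_eq, proj_ket2, ← diagonal_single, ← diagonal_one, diagonal_add, diagonal_sub,
    posSemidef_diagonal_iff]
  intro p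
  simp only [Pi.single_apply]
  split_ifs <;> simp_all

def bellVec (i j : Fin d) : Fin 4 → (Fin d × Fin d → ℂ) :=
  ![ket2 i i + ket2 j j, ket2 i i - ket2 j j, ket2 i j + ket2 j i, ket2 i j - ket2 j i]

lemma PT_proj_bellVec (i j : Fin d) (k : Fin 4) :
    PT (proj (bellVec i j k)) = oneij i j - proj (bellVec i j k.rev) := by
  fin_cases k <;>
    simp [bellVec, proj_add, proj_sub, vecMulVec_ket2_star_ket2, proj_ket2, oneij_eq,
      PT_single] <;>
    abel

lemma proj_Psi (i j : Fin d) (k : Fin 4) :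
    proj (Psi i j k) = (1 / 2 : ℂ) • proj (bellVec i j k) := by
  have hPsi : Psi i j k = ((Real.sqrt 2 : ℂ))⁻¹ • bellVec i j k := by
    fin_cases k <;> rfl
  have hnorm : star ((Real.sqrt 2 : ℂ))⁻¹ * ((Real.sqrt 2 : ℂ))⁻¹ = 1 / 2 := by
    rw [star_inv₀, Complex.star_def, Complex.conj_ofReal, ← mul_inv, ← Complex.ofReal_mul,
      Real.mul_self_sqrt zero_le_two]
    norm_num
  rw [hPsi, proj_smul, hnorm]

/-- Scaled by `λ / (2d(d-1))` this is the paper's optimality certificate; `k.rev` is the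
index `5 - k` of the paper, whose indices run over `1, …, 4`. -/
lemma half_one_sub_PT_proj_Psi (i j : Fin d) (k : Fin 4) :
    (1 / 2 : ℂ) • 1 - PT (proj (Psi i j k)) =
      (1 / 2 : ℂ) • (1 - oneij i j) + proj (Psi i j k.rev) := by
  rw [proj_Psi, proj_Psi, PT_smul, PT_proj_bellVec]
  module

lemma re_trace_PT_proj_Psi_mul_le {i j : Fin d} (hij : i ≠ j) (k : Fin 4) {M : Op2 d}
    (hM : M.PosSemidef) : ((PT (proj (Psi i j k)) * M).trace).re ≤ (M.trace).re / 2 := by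
  have hC : ((1 / 2 : ℂ) • 1 - PT (proj (Psi i j k))).PosSemidef := by
    rw [half_one_sub_PT_proj_Psi]
    exact ((posSemidef_one_sub_oneij hij).smul (by positivity)).add
      (posSemidef_vecMulVec_self_star _)
  have hnonneg := (Complex.nonneg_iff.mp (hC.trace_mul_nonneg hM)).1
  simp only [sub_mul, smul_mul_assoc, one_mul, trace_sub, trace_smul, smul_eq_mul,
    Complex.sub_re, Complex.mul_re] at hnonneg
  norm_num at hnonneg
  linarith

lemma Mprod_posSemidef (i j : Fin d) (k : Fin 4) : (Mprod i j k).PosSemidef := by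
  fin_cases k
  all_goals first
    | exact (posSemidef_vecMulVec_self_star _).smul (Complex.inv_natCast_sub_one_nonneg i.pos)
    | exact posSemidef_vecMulVec_self_star _

lemma sum_Mprod (hd : 2 ≤ d) : ∑ t : Idx d, Mprod t.1.1.1 t.1.1.2 t.2 = 1 := by
  have hpair : ∀ i j : Fin d, ∑ k, Mprod i j k =
      (((d : ℂ) - 1)⁻¹ • proj (ket2 i i) + proj (ket2 i j)) +
        (((d : ℂ) - 1)⁻¹ • proj (ket2 j j) + proj (ket2 j i)) := by
    intro i j
    simp only [Fin.sum_univ_four, Mprod, Matrix.cons_val]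
    abel
  have hcard : ((d - 1 : ℕ) : ℂ) * ((d : ℂ) - 1)⁻¹ = 1 := by
    rw [Nat.cast_pred (by omega)]
    exact mul_inv_cancel₀ (sub_ne_zero.mpr (by norm_cast; omega))
  have hrow : ∀ i : Fin d, ∑ j ∈ Finset.univ.erase i,
      (((d : ℂ) - 1)⁻¹ • proj (ket2 i i) + proj (ket2 i j)) = ∑ j, proj (ket2 i j) := by
    intro i
    rw [Finset.sum_add_distrib, Finset.sum_const, Finset.card_erase_of_mem (Finset.mem_univ i),
      Finset.card_univ, Fintype.card_fin, ← Nat.cast_smul_eq_nsmul ℂ, smul_smul, hcard,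
      one_smul, Finset.add_sum_erase _ (fun j => proj (ket2 i j)) (Finset.mem_univ i)]
  rw [Fintype.sum_prod_type]
  simp only [hpair, Finset.sum_subtype_lt_add_swap
    (fun i j => ((d : ℂ) - 1)⁻¹ • proj (ket2 i i) + proj (ket2 i j)), hrow, sum_proj_ket2]

lemma trace_PT_proj_Psi_mul_Mprod {i j : Fin d} (hij : i ≠ j) (k : Fin 4) :
    (PT (proj (Psi i j k)) * Mprod i j k).trace = (Mprod i j k).trace / 2 := by
  rw [proj_Psi]
  fin_cases k <;>
    simp only [Mprod, Fin.zero_eta, Fin.mk_one, Fin.reduceFinMk, Matrix.cons_val, proj_ket2,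
      mul_smul_comm, trace_smul, trace_mul_single, trace_single_eq_same] <;>
    simp [PT, proj, bellVec, vecMulVec_apply, ket2, hij, hij.symm, div_eq_mul_inv]

lemma sum_re_trace_PT_rhoE_mul (lam : ℝ) {σ : Op2 d} (hσ : σ.trace = 1)
    {M : Idx d → Op2 d} (hM : ∑ t, M t = 1) :
    ∑ t, ((PT (rhoE lam σ t) * M t).trace).re =
      lam * ∑ t, ((PT (proj (Psi t.1.1.1 t.1.1.2 t.2)) * M t).trace).re + (1 - lam) := by
  have hσM : ∑ t, ((PT σ * M t).trace).re = 1 := by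
    rw [← Complex.re_sum, ← trace_sum, ← Matrix.mul_sum, hM, mul_one, trace_PT, hσ,
      Complex.one_re]
  simp only [rhoE, PT_add, PT_smul, add_mul, smul_mul_assoc, trace_add, trace_smul, smul_eq_mul,
    Complex.add_re, Complex.re_ofReal_mul, Finset.sum_add_distrib, ← Finset.mul_sum, hσM,
    mul_one]

lemma sum_re_trace_div_two {M : Idx d → Op2 d} (hM : ∑ t, M t = 1) :
    ∑ t, ((M t).trace).re / 2 = (d : ℝ) ^ 2 / 2 := by
  rw [← Finset.sum_div, ← Complex.re_sum, ← trace_sum, hM, trace_one]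
  simp [sq]

lemma sum_re_trace_PT_proj_Psi_mul_le {M : Idx d → Op2 d}
    (hMpsd : ∀ t, (M t).PosSemidef) (hM : ∑ t, M t = 1) :
    ∑ t, ((PT (proj (Psi t.1.1.1 t.1.1.2 t.2)) * M t).trace).re ≤ (d : ℝ) ^ 2 / 2 := by
  rw [← sum_re_trace_div_two hM]
  exact Finset.sum_le_sum fun t _ => re_trace_PT_proj_Psi_mul_le t.1.2.ne t.2 (hMpsd t)

lemma sum_re_trace_PT_proj_Psi_mul_Mprod (hd : 2 ≤ d) :
    ∑ t : Idx d, ((PT (proj (Psi t.1.1.1 t.1.1.2 t.2)) * Mprod t.1.1.1 t.1.1.2 t.2).trace).re =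
      (d : ℝ) ^ 2 / 2 := by
  rw [← sum_re_trace_div_two (sum_Mprod hd)]
  refine Finset.sum_congr rfl fun t _ => ?_
  rw [trace_PT_proj_Psi_mul_Mprod t.1.2.ne, Complex.div_ofNat_re]

end TwoQudits
theorem qG_example_general {d : ℕ} (hd : 2 ≤ d) (lam : ℝ) (hlam0 : 0 < lam)
    (σ : Op2 d) (hσ : σ.PosSemidef ∧ σ.trace = 1) :
    IsGreatest
      {x | ∃ M : Idx d → Op2 d, (∀ t, (M t).PosSemidef) ∧ (∑ t, M t = 1) ∧
        x = ∑ t, (1 / (2 * d * (d - 1)) : ℝ) * ((PT (rhoE lam σ t) * M t).trace).re}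
      ((2 + lam * ((d : ℝ) ^ 2 - 2)) / (4 * d * (d - 1))) ∧
    ∑ t : Idx d, (1 / (2 * d * (d - 1)) : ℝ) *
        ((PT (rhoE lam σ t) * Mprod t.1.1.1 t.1.1.2 t.2).trace).re =
      (2 + lam * ((d : ℝ) ^ 2 - 2)) / (4 * d * (d - 1)) := by
  have hd' : (2 : ℝ) ≤ d := by exact_mod_cast hd
  have hη : 0 < (1 / (2 * d * (d - 1)) : ℝ) := one_div_pos.mpr (by nlinarith)
  have hvalue : (1 / (2 * d * (d - 1)) : ℝ) * (lam * ((d : ℝ) ^ 2 / 2) + (1 - lam)) =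
      (2 + lam * ((d : ℝ) ^ 2 - 2)) / (4 * d * (d - 1)) := by
    field_simp
    ring
  have hMprod : ∑ t : Idx d, (1 / (2 * d * (d - 1)) : ℝ) *
      ((PT (rhoE lam σ t) * Mprod t.1.1.1 t.1.1.2 t.2).trace).re =
        (2 + lam * ((d : ℝ) ^ 2 - 2)) / (4 * d * (d - 1)) := by
    rw [← Finset.mul_sum, sum_re_trace_PT_rhoE_mul lam hσ.2 (sum_Mprod hd),
      sum_re_trace_PT_proj_Psi_mul_Mprod hd, hvalue]
  refine ⟨⟨⟨_, fun t => Mprod_posSemidef _ _ _, sum_Mprod hd, hMprod.symm⟩, ?_⟩, hMprod⟩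
  rintro x ⟨M, hMpsd, hM, rfl⟩
  rw [← Finset.mul_sum, sum_re_trace_PT_rhoE_mul lam hσ.2 hM, ← hvalue]
  gcongr
  exact sum_re_trace_PT_proj_Psi_mul_le hMpsd hM

theorem qG_example {d : ℕ} (hd : 2 ≤ d) (lam : ℝ) (hlam0 : 0 < lam) (hlam1 : lam ≤ 1)
    (σ : Op2 d) (hσ : σ.PosSemidef ∧ σ.trace = 1) :
    IsGreatest
      {x | ∃ M : Idx d → Op2 d, (∀ t, (M t).PosSemidef) ∧ (∑ t, M t = 1) ∧
        x = ∑ t, (1 / (2 * d * (d - 1)) : ℝ) * ((PT (rhoE lam σ t) * M t).trace).re}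
      ((2 + lam * ((d : ℝ) ^ 2 - 2)) / (4 * d * (d - 1))) ∧
    ∑ t : Idx d, (1 / (2 * d * (d - 1)) : ℝ) *
        ((PT (rhoE lam σ t) * Mprod t.1.1.1 t.1.1.2 t.2).trace).re =
      (2 + lam * ((d : ℝ) ^ 2 - 2)) / (4 * d * (d - 1)) :=
  qG_example_general hd lam hlam0 σ hσ
end
end
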